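/- arXiv:2204.04311 — 3 statements merged into one kernel-verified Lean document; each statement's English description precedes it below -/
import Mathlib

section
/- Let G be a finite group, p a prime, P a Sylow p-subgroup of G, and H a subgroup of G containing P. Then the number of distinct conjugates of H containing P is at most |N_G(P) : P|. -/
/-! The map `n P ↦ n H n⁻¹` from `N_G(P) / P` to the conjugates of `H` containing `P` is well
defined because `P ≤ H`, and it is surjective by a Frattini argument inside `H`. -/

open Pointwise

theorem Subgroup.conj_smul_eq_conj_smul_of_inv_mul_mem {G : Type*} [Group G] {H : Subgroup G}
    {a b : G} (h : a⁻¹ * b ∈ H) : MulAut.conj a • H = MulAut.conj b • H := by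
  rw [← mul_inv_cancel_left a b, map_mul, mul_smul, Subgroup.conj_smul_eq_self_of_mem h]

namespace Sylow

variable {G : Type*} [Group G] {p : ℕ} {P : Sylow p G} {H : Subgroup G}

theorem le_conj_smul_of_mem_normalizer (hPH : (P : Subgroup G) ≤ H) {n : G}
    (hn : n ∈ Subgroup.normalizer ((P : Subgroup G) : Set G)) :
    (P : Subgroup G) ≤ MulAut.conj n • H := by
  rw [← congrArg Sylow.toSubgroup (smul_eq_iff_mem_normalizer.mpr hn), coe_subgroup_smul]
  exact Subgroup.pointwise_smul_le_pointwise_smul_iff.mpr hPH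

/-- Frattini argument: `g⁻¹ P g` and `P` are Sylow subgroups of `H`, hence conjugate by some
`h ∈ H`; then `g h⁻¹` normalizes `P` and conjugates `H` to the same subgroup as `g`. -/
theorem exists_mem_normalizer_conj_smul_eq [Fact p.Prime] [Finite (Sylow p H)]
    (hPH : (P : Subgroup G) ≤ H) {g : G} (hPg : (P : Subgroup G) ≤ MulAut.conj g • H) :
    ∃ n ∈ Subgroup.normalizer ((P : Subgroup G) : Set G),
      MulAut.conj n • H = MulAut.conj g • H := by
  have hP' : ((g⁻¹ • P : Sylow p G) : Subgroup G) ≤ H := by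
    rwa [coe_subgroup_smul, map_inv, ← Subgroup.subset_pointwise_smul_iff]
  obtain ⟨h, hh⟩ := MulAction.exists_smul_eq H ((g⁻¹ • P).subtype hP') (P.subtype hPH)
  rw [smul_subtype] at hh
  have hhg : ((h : G) * g⁻¹) • P = P := by
    rw [← smul_smul, ← Subgroup.smul_def]
    exact subtype_injective hh
  refine ⟨((h : G) * g⁻¹)⁻¹, Subgroup.inv_mem _ (smul_eq_iff_mem_normalizer.mp hhg), ?_⟩
  rw [mul_inv_rev, inv_inv, map_mul, mul_smul, Subgroup.conj_smul_eq_self_of_mem (H.inv_mem h.2)]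

end Sylow

/-- The number of conjugates of `H` containing the Sylow `p`-subgroup `P` (where `P ≤ H`)
is at most `|N_G(P) : P|`. -/
theorem stmt1 {G : Type*} [Group G] [Finite G] {p : ℕ} [Fact p.Prime]
    (P : Sylow p G) (H : Subgroup G) (hPH : (P : Subgroup G) ≤ H) :
    Nat.card {K : Subgroup G // (∃ g : G, K = MulAut.conj g • H) ∧ (P : Subgroup G) ≤ K}
      ≤ (P : Subgroup G).relIndex (Subgroup.normalizer ((P : Subgroup G) : Set G)) := by
  set N := Subgroup.normalizer ((P : Subgroup G) : Set G)
  let f : N ⧸ (P : Subgroup G).subgroupOf N →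
      {K : Subgroup G // (∃ g : G, K = MulAut.conj g • H) ∧ (P : Subgroup G) ≤ K} :=
    Quotient.lift
      (fun n => ⟨MulAut.conj (n : G) • H, ⟨n, rfl⟩,
        Sylow.le_conj_smul_of_mem_normalizer hPH n.2⟩)
      fun a b hab => Subtype.ext <| Subgroup.conj_smul_eq_conj_smul_of_inv_mul_mem <|
        hPH (Subgroup.mem_subgroupOf.mp (QuotientGroup.leftRel_apply.mp hab))
  refine Nat.card_le_card_of_surjective f ?_
  rintro ⟨K, ⟨g, rfl⟩, hPK⟩
  obtain ⟨n, hn, hnH⟩ := Sylow.exists_mem_normalizer_conj_smul_eq hPH hPK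
  exact ⟨QuotientGroup.mk ⟨n, hn⟩, Subtype.ext hnH⟩
end

section
/- Let G be a finite group, let P be a proper subgroup, let M be the set of maximal subgroups of G containing P, and let x ∈ G. If the sum over H ∈ M of fpr(x, G/H) is strictly less than 1, where fpr(x, G/H) = |x^G ∩ H|/|x^G|, then there exists g ∈ G such that G = ⟨P, x^g⟩. -/
/-!
If every conjugate of `x` lay in some maximal overgroup of `P`, the conjugacy class `x^G` would
be covered by the sets `x^G ∩ H`, `H ∈ M`, and the union bound would give `∑ fpr(x, G/H) ≥ 1`.
So some conjugate `y` of `x` lies in no maximal subgroup containing `P`; since every proper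
subgroup of a finite group lies in a maximal one, `⟨P, y⟩ = G`.
-/

open Finset

theorem Set.exists_mem_forall_notMem_of_sum_ncard_inter_lt {α ι : Type*} {s : Set α}
    {M : Finset ι} {t : ι → Set α} (h : ∑ i ∈ M, (s ∩ t i).ncard < s.ncard) :
    ∃ y ∈ s, ∀ i ∈ M, y ∉ t i := by
  by_contra! hcover
  have hs : s.Finite := Set.finite_of_ncard_pos (by omega)
  have hsub : s ⊆ ⋃ i ∈ M, s ∩ t i := fun y hy => by
    obtain ⟨i, hi, hyi⟩ := hcover y hy
    exact Set.mem_biUnion hi ⟨hy, hyi⟩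
  have hfin : (⋃ i ∈ M, s ∩ t i).Finite :=
    hs.subset (Set.iUnion₂_subset fun _ _ => inter_subset_left)
  exact h.not_ge ((Set.ncard_le_ncard hsub hfin).trans (M.set_ncard_biUnion_le _))

theorem Subgroup.sup_zpowers_eq_top_of_forall_isCoatom {G : Type*} [Group G]
    [IsCoatomic (Subgroup G)] {P : Subgroup G} {y : G}
    (hy : ∀ H : Subgroup G, IsCoatom H → P ≤ H → y ∉ H) : P ⊔ zpowers y = ⊤ := by
  by_contra hne
  obtain ⟨H, hH, hle⟩ := (eq_top_or_exists_le_coatom (P ⊔ zpowers y)).resolve_left hne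
  exact hy H hH (le_sup_left.trans hle) (hle (mem_sup_right (mem_zpowers y)))

theorem stmt4_general {G : Type*} [Group G] [Finite G] (P : Subgroup G)
    (M : Finset (Subgroup G)) (hM : ∀ H : Subgroup G, H ∈ M ↔ (IsCoatom H ∧ P ≤ H)) (x : G)
    (h : ∑ H ∈ M, ((Nat.card {y : G // IsConj x y ∧ y ∈ H} : ℚ)
        / (Nat.card {y : G // IsConj x y} : ℚ)) < 1) :
    ∃ g : G, P ⊔ Subgroup.zpowers (g⁻¹ * x * g) = ⊤ := by
  set C : Set G := {y | IsConj x y}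
  have hC : 0 < C.ncard := (Set.ncard_pos C.toFinite).2 ⟨x, IsConj.refl x⟩
  have hcount : ∑ H ∈ M, (C ∩ H).ncard < C.ncard := by
    rw [← sum_div, div_lt_one (by exact_mod_cast hC)] at h
    exact_mod_cast h
  obtain ⟨y, hxy, hy⟩ := Set.exists_mem_forall_notMem_of_sum_ncard_inter_lt hcount
  obtain ⟨c, rfl⟩ := isConj_iff.1 hxy
  refine ⟨c⁻¹, Subgroup.sup_zpowers_eq_top_of_forall_isCoatom fun H hH hPH => ?_⟩
  simpa using hy H ((hM H).2 ⟨hH, hPH⟩)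

/-- If the sum of fixed point ratios `|x^G ∩ H|/|x^G|` over the maximal subgroups `H`
containing the proper subgroup `P` is less than 1, then `G = ⟨P, x^g⟩` for some `g`. -/
theorem stmt4 {G : Type*} [Group G] [Finite G] (P : Subgroup G) (hP : P ≠ ⊤)
    (M : Finset (Subgroup G)) (hM : ∀ H : Subgroup G, H ∈ M ↔ (IsCoatom H ∧ P ≤ H)) (x : G)
    (h : ∑ H ∈ M, ((Nat.card {y : G // IsConj x y ∧ y ∈ H} : ℚ)
        / (Nat.card {y : G // IsConj x y} : ℚ)) < 1) :
    ∃ g : G, P ⊔ Subgroup.zpowers (g⁻¹ * x * g) = ⊤ :=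
  stmt4_general P M hM x h
end

section
/- For every real number q ≥ 3 and every even integer n ≥ 12, the inequality (n/4)·(2q² + 1)·q^{−n/2} + 1/(q−1) + q^{2⌊n/4⌋ − n}·q²/(q² − 1) < 42/43 holds. -/
/-!
Each term is bounded separately. Writing `k = ⌊n/2⌋ ≥ 6`, the first term is
`n(2q²+1)/(4qᵏ)`; since `3/q ≤ 1` we have `3ᵏq² ≤ 9qᵏ`, which reduces it to the
integer inequality `171(2k+1) ≤ 4·3ᵏ` and gives the bound `1/9`. The second term is at most
`1/2`. In the third term the exponent is at most `-2`, so it is at most `1/(q²-1) ≤ 1/8`.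
-/

lemma mul_two_add_one_le_four_mul_three_pow {k : ℕ} (hk : 6 ≤ k) :
    171 * (2 * k + 1) ≤ 4 * 3 ^ k := by
  induction k, hk using Nat.le_induction with
  | base => norm_num
  | succ k _ ih =>
    rw [pow_succ]
    omega

lemma three_pow_mul_sq_le {q : ℝ} (hq : 3 ≤ q) {k : ℕ} (hk : 2 ≤ k) :
    3 ^ k * q ^ 2 ≤ 9 * q ^ k := by
  obtain ⟨j, rfl⟩ := Nat.exists_eq_add_of_le' hk
  have h3q : (3 : ℝ) ^ j ≤ q ^ j := pow_le_pow_left₀ (by norm_num) hq j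
  have hq2 : (0 : ℝ) ≤ q ^ 2 := by positivity
  calc (3 : ℝ) ^ (j + 2) * q ^ 2 = 9 * (3 ^ j * q ^ 2) := by ring
    _ ≤ 9 * (q ^ j * q ^ 2) := by gcongr
    _ = 9 * q ^ (j + 2) := by ring

lemma div_four_mul_mul_zpow_neg_half_le {q : ℝ} (hq : 3 ≤ q) {n : ℕ} (hn : 12 ≤ n) :
    (n / 4 : ℝ) * (2 * q ^ 2 + 1) * q ^ (-((n : ℤ) / 2)) ≤ 1 / 9 := by
  set k := n / 2 with hk
  have hk6 : 6 ≤ k := by omega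
  have hzpow : q ^ (-((n : ℤ) / 2)) = (q ^ k)⁻¹ := by
    rw [← zpow_natCast, ← zpow_neg, hk, Int.natCast_div]
    rfl
  have hqk : 0 < q ^ k := by positivity
  have hnk : (171 * n : ℝ) ≤ 4 * 3 ^ k := by
    have := mul_two_add_one_le_four_mul_three_pow hk6
    exact_mod_cast (by omega : 171 * n ≤ 4 * 3 ^ k)
  have hq2 : (9 : ℝ) ≤ q ^ 2 := by nlinarith
  have hn0 : (0 : ℝ) ≤ n := n.cast_nonneg
  rw [hzpow, ← div_eq_mul_inv, div_le_div_iff₀ hqk (by norm_num)]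
  calc (n / 4 : ℝ) * (2 * q ^ 2 + 1) * 9 = n * (18 * q ^ 2 + 9) / 4 := by ring
    _ ≤ n * (19 * q ^ 2) / 4 := by gcongr; linarith
    _ = (171 * n) * q ^ 2 / 36 := by ring
    _ ≤ 4 * 3 ^ k * q ^ 2 / 36 := by gcongr
    _ = (3 ^ k * q ^ 2) / 9 := by ring
    _ ≤ 9 * q ^ k / 9 := by gcongr ?_ / 9; exact three_pow_mul_sq_le hq (by omega)
    _ = 1 * q ^ k := by ring

lemma zpow_mul_sq_div_sq_sub_one_le {q : ℝ} (hq : 1 < q) {e : ℤ} (he : e ≤ -2) :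
    q ^ e * (q ^ 2 / (q ^ 2 - 1)) ≤ 1 / (q ^ 2 - 1) := by
  have hq2 : 0 < q ^ 2 - 1 := by nlinarith
  calc q ^ e * (q ^ 2 / (q ^ 2 - 1)) ≤ q ^ (-2 : ℤ) * (q ^ 2 / (q ^ 2 - 1)) := by
        gcongr
        exact hq.le
    _ = 1 / (q ^ 2 - 1) := by
        rw [zpow_neg, zpow_ofNat]
        field_simp

theorem stmt12_general (q : ℝ) (hq : 3 ≤ q) (n : ℕ) (hn : 12 ≤ n) :
    (n / 4 : ℝ) * (2 * q ^ 2 + 1) * q ^ (-((n : ℤ) / 2)) + 1 / (q - 1)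
      + q ^ (2 * ((n : ℤ) / 4) - (n : ℤ)) * (q ^ 2 / (q ^ 2 - 1)) < 42 / 43 := by
  have hfirst := div_four_mul_mul_zpow_neg_half_le hq hn
  have hsecond : 1 / (q - 1) ≤ 1 / 2 := one_div_le_one_div_of_le (by norm_num) (by linarith)
  have hthird := zpow_mul_sq_div_sq_sub_one_le (by linarith : 1 < q)
    (by omega : 2 * ((n : ℤ) / 4) - (n : ℤ) ≤ -2)
  have hq2 : 1 / (q ^ 2 - 1) ≤ 1 / 8 := one_div_le_one_div_of_le (by norm_num) (by nlinarith)
  linarith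

/-- The numerical estimate used to bound `Σ₂(x)` in the symplectic case: for real `q ≥ 3`
and even `n ≥ 12`,
`(n/4)(2q²+1)q^{-n/2} + 1/(q-1) + q^{2⌊n/4⌋-n}·q²/(q²-1) < 42/43`. -/
theorem stmt12 (q : ℝ) (hq : 3 ≤ q) (n : ℕ) (hn : 12 ≤ n) (hev : Even n) :
    (n / 4 : ℝ) * (2 * q ^ 2 + 1) * q ^ (-((n : ℤ) / 2)) + 1 / (q - 1)
      + q ^ (2 * ((n : ℤ) / 4) - (n : ℤ)) * (q ^ 2 / (q ^ 2 - 1)) < 42 / 43 :=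
  stmt12_general q hq n hn
end
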